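/- arXiv:1211.2439 — 6 statements merged into one kernel-verified Lean document; each statement's English description precedes it below -/
import Mathlib

section
/- Let n ≥ 2 be an integer and a > 0. The improper integral ∫_a^∞ (sinh^{2n−2}(u) − sinh^{2n−2}(a))^{−1/2} du converges; consequently T(a) = sinh^{n−1}(a) · ∫_a^∞ (sinh^{2n−2}(u) − sinh^{2n−2}(a))^{−1/2} du is a finite positive real number. -/
/-!
For `0 < a < u` and `m ≥ 1`, the inequalities `x ^ m - y ^ m ≥ y ^ (m - 1) * (x - y)` for
`0 ≤ y ≤ x` and `sinh u - sinh a ≥ sinh (u - a)` give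
`sinh u ^ m - sinh a ^ m ≥ sinh a ^ (m - 1) * sinh (u - a)`, so the integrand is dominated by a
multiple of `sinh (u - a) ^ (-1/2)`. For `0 < r < 1` the function `t ↦ sinh t ^ (-r)` is
integrable on `(0, ∞)`: it is at most `t ^ (-r)` near `0` and decays like `exp (-r t)` at
infinity. The integrand is positive on `(a, ∞)`, hence so is `T n a`.
-/

/-- `T n a = sinh^{n-1}(a) · ∫_a^∞ (sinh^{2n-2}(u) − sinh^{2n-2}(a))^{-1/2} du`. -/
noncomputable def T (n : ℕ) (a : ℝ) : ℝ :=
  Real.sinh a ^ (n - 1) *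
    ∫ u in Set.Ioi a,
      (Real.sinh u ^ (2 * n - 2) - Real.sinh a ^ (2 * n - 2)) ^ (-(1 : ℝ) / 2)

open Real MeasureTheory Set

lemma pow_mul_sub_le_pow_succ_sub_pow_succ {R : Type*} [CommRing R] [LinearOrder R]
    [IsOrderedRing R] {x y : R} (hy : 0 ≤ y) (hyx : y ≤ x) (m : ℕ) :
    y ^ m * (x - y) ≤ x ^ (m + 1) - y ^ (m + 1) := by
  have hpow : y ^ m ≤ x ^ m := pow_le_pow_left₀ hy hyx m
  rw [pow_succ, pow_succ]
  linear_combination mul_le_mul_of_nonneg_right hpow (hy.trans hyx)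

namespace Real

lemma sinh_sub_le_sinh_sub_sinh {a u : ℝ} (ha : 0 ≤ a) (hau : a ≤ u) :
    sinh (u - a) ≤ sinh u - sinh a := by
  have hsum : sinh u = sinh (u - a) * cosh a + cosh (u - a) * sinh a := by
    rw [← sinh_add, sub_add_cancel]
  nlinarith [sinh_nonneg_iff.2 (sub_nonneg.2 hau), sinh_nonneg_iff.2 ha, one_le_cosh a,
    one_le_cosh (u - a)]

lemma exp_div_four_le_sinh {t : ℝ} (ht : 1 ≤ t) : exp t / 4 ≤ sinh t := by
  have hneg : exp (-t) ≤ 1 := exp_le_one_iff.2 (by linarith)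
  have htwo : 2 ≤ exp t := by linarith [add_one_le_exp t]
  rw [sinh_eq]
  linarith

lemma sinh_pow_sub_sinh_pow_pos {a u : ℝ} (ha : 0 ≤ a) (hau : a < u) {m : ℕ} (hm : m ≠ 0) :
    0 < sinh u ^ m - sinh a ^ m :=
  sub_pos.2 (pow_lt_pow_left₀ (sinh_lt_sinh.2 hau) (sinh_nonneg_iff.2 ha) hm)

lemma integrableOn_sinh_rpow_neg {r : ℝ} (hr₀ : 0 < r) (hr₁ : r < 1) :
    IntegrableOn (fun t => sinh t ^ (-r)) (Ioi 0) := by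
  have hmeas : AEStronglyMeasurable (fun t => sinh t ^ (-r)) volume :=
    Measurable.aestronglyMeasurable (by fun_prop)
  have hnear : IntegrableOn (fun t => sinh t ^ (-r)) (Ioc 0 1) := by
    have hpow : IntegrableOn (fun t : ℝ => t ^ (-r)) (Ioc 0 1) :=
      (integrableOn_Ioc_iff_integrableOn_Ioo (by finiteness)).2
        ((intervalIntegral.integrableOn_Ioo_rpow_iff one_pos).2 (by linarith))
    refine hpow.mono' hmeas.restrict ((ae_restrict_iff' measurableSet_Ioc).2 (.of_forall ?_))
    intro t ht
    rw [norm_of_nonneg (rpow_nonneg (sinh_nonneg_iff.2 ht.1.le) _)]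
    exact rpow_le_rpow_of_nonpos ht.1 (self_le_sinh_iff.2 ht.1.le) (by linarith)
  have htail : IntegrableOn (fun t => sinh t ^ (-r)) (Ioi 1) := by
    have hexp : IntegrableOn (fun t => exp (-r * t) / 4 ^ (-r)) (Ioi 1) :=
      (exp_neg_integrableOn_Ioi 1 hr₀).div_const _
    refine hexp.mono' hmeas.restrict ((ae_restrict_iff' measurableSet_Ioi).2 (.of_forall ?_))
    intro t ht
    have ht : 1 ≤ t := ht.le
    rw [norm_of_nonneg (rpow_nonneg (sinh_nonneg_iff.2 (by linarith)) _)]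
    calc sinh t ^ (-r) ≤ (exp t / 4) ^ (-r) :=
          rpow_le_rpow_of_nonpos (by positivity) (exp_div_four_le_sinh ht) (by linarith)
      _ = exp (-r * t) / 4 ^ (-r) := by
          rw [div_rpow (exp_pos t).le (by norm_num), ← exp_mul, mul_comm]
  rw [← Ioc_union_Ioi_eq_Ioi zero_le_one]
  exact hnear.union htail

lemma integrableOn_sinh_pow_sub_sinh_pow_rpow_neg {a r : ℝ} (ha : 0 < a) (hr₀ : 0 < r)
    (hr₁ : r < 1) {m : ℕ} (hm : m ≠ 0) :
    IntegrableOn (fun u => (sinh u ^ m - sinh a ^ m) ^ (-r)) (Ioi a) := by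
  obtain ⟨k, rfl⟩ := Nat.exists_eq_succ_of_ne_zero hm
  have hsa : 0 < sinh a := sinh_pos_iff.2 ha
  have hshift : IntegrableOn (fun u => sinh (u - a) ^ (-r)) (Ioi a) := by
    have := (measurePreserving_sub_right volume a).integrableOn_comp_preimage
      (measurableEmbedding_subRight a) (f := fun t => sinh t ^ (-r)) (s := Ioi 0)
    rw [preimage_sub_const_Ioi, zero_add] at this
    exact this.2 (integrableOn_sinh_rpow_neg hr₀ hr₁)
  refine (hshift.const_mul ((sinh a ^ k) ^ (-r))).mono'
    (Measurable.aestronglyMeasurable (by fun_prop))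
    ((ae_restrict_iff' measurableSet_Ioi).2 (.of_forall ?_))
  intro u hu
  have hau : a < u := hu
  have hlower : sinh a ^ k * sinh (u - a) ≤ sinh u ^ (k + 1) - sinh a ^ (k + 1) :=
    calc sinh a ^ k * sinh (u - a) ≤ sinh a ^ k * (sinh u - sinh a) :=
          mul_le_mul_of_nonneg_left (sinh_sub_le_sinh_sub_sinh ha.le hau.le) (by positivity)
      _ ≤ sinh u ^ (k + 1) - sinh a ^ (k + 1) :=
          pow_mul_sub_le_pow_succ_sub_pow_succ hsa.le (sinh_lt_sinh.2 hau).le k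
  have hshift_pos : 0 < sinh (u - a) := sinh_pos_iff.2 (sub_pos.2 hau)
  have hpos : 0 < sinh a ^ k * sinh (u - a) := mul_pos (pow_pos hsa k) hshift_pos
  rw [norm_of_nonneg (rpow_nonneg (hpos.le.trans hlower) _),
    ← mul_rpow (pow_pos hsa k).le hshift_pos.le]
  exact rpow_le_rpow_of_nonpos hpos hlower (by linarith)

end Real

lemma MeasureTheory.setIntegral_pos_of_forall_pos {X : Type*} [MeasurableSpace X]
    {μ : Measure X} {f : X → ℝ} {s : Set X} (hs : MeasurableSet s) (hμs : μ s ≠ 0)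
    (hf : ∀ x ∈ s, 0 < f x) (hfi : IntegrableOn f s μ) : 0 < ∫ x in s, f x ∂μ := by
  have hnonneg : 0 ≤ᵐ[μ.restrict s] f :=
    (ae_restrict_iff' hs).2 (.of_forall fun x hx => (hf x hx).le)
  have hsupp : Function.support f ∩ s = s := inter_eq_right.2 fun x hx => (hf x hx).ne'
  rw [setIntegral_pos_iff_support_of_nonneg_ae hnonneg hfi, hsupp]
  exact pos_iff_ne_zero.2 hμs

/-- For an integer `n ≥ 2` and `a > 0`, the improper integral
`∫_a^∞ (sinh^{2n-2}(u) − sinh^{2n-2}(a))^{-1/2} du` converges; consequently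
`T(a)` is a finite positive real number. -/
theorem T_integrable_and_pos (n : ℕ) (hn : 2 ≤ n) (a : ℝ) (ha : 0 < a) :
    MeasureTheory.IntegrableOn
        (fun u : ℝ =>
          (Real.sinh u ^ (2 * n - 2) - Real.sinh a ^ (2 * n - 2)) ^ (-(1 : ℝ) / 2))
        (Set.Ioi a) ∧
      0 < T n a := by
  have hm : 2 * n - 2 ≠ 0 := by omega
  have hint := integrableOn_sinh_pow_sub_sinh_pow_rpow_neg ha (r := 1 / 2) (by norm_num)
    (by norm_num) hm
  rw [← neg_div] at hint
  refine ⟨hint, mul_pos (pow_pos (sinh_pos_iff.2 ha) _) ?_⟩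
  refine setIntegral_pos_of_forall_pos measurableSet_Ioi (by simp) (fun u hu => ?_) hint
  exact rpow_pos_of_pos (sinh_pow_sub_sinh_pow_pos ha.le hu hm) _
end

section
/- Let n ≥ 2 be an integer and a > 0, and let f(a,·) be the maximal solution of f'' = (n−1)(1+(f')²)·coth(f), f(0) = a, f'(0) = 0, defined on I_a = (−T(a), T(a)). Then the quantity sinh^{n−1}(f(a,t)) / √(1 + f_t(a,t)²) is constant along the solution; more precisely, sinh^{n−1}(f(a,t)) = sinh^{n−1}(a) · √(1 + f_t(a,t)²) for all t ∈ I_a. -/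
/-- `f` solves the catenary ODE `f'' = (n-1)(1+(f')²) coth(f)` on the set `I`,
with initial conditions `f(0) = a`, `f'(0) = 0`. -/
def IsCatenarySolOn (n : ℕ) (a : ℝ) (I : Set ℝ) (f : ℝ → ℝ) : Prop :=
  (0 : ℝ) ∈ I ∧ f 0 = a ∧ deriv f 0 = 0 ∧
    ∀ t ∈ I, HasDerivAt f (deriv f t) t ∧
      HasDerivAt (deriv f)
        (((n : ℝ) - 1) * (1 + deriv f t ^ 2) * (Real.cosh (f t) / Real.sinh (f t))) t


/-!
Differentiating `sinh^{n-1}(f) / √(1 + f'²)` and substituting the equation for `f''` gives zero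
wherever `sinh f ≠ 0`. Since `coth` is only a junk value where `sinh f = 0`, the argument is
topological: the set where the quotient equals its initial value `sinh^{n-1} a ≠ 0` avoids the
zeros of `sinh f`, so it is open by the mean value theorem and relatively closed by continuity,
hence all of the interval.
-/

open Real Set Topology

noncomputable def catenaryFirstIntegral (k : ℕ) (f f' : ℝ → ℝ) (t : ℝ) : ℝ :=
  sinh (f t) ^ k / √(1 + f' t ^ 2)

theorem hasDerivAt_catenaryFirstIntegral {f f' : ℝ → ℝ} {x : ℝ} (k : ℕ)
    (hf : HasDerivAt f (f' x) x)
    (hf' : HasDerivAt f' (k * (1 + f' x ^ 2) * (cosh (f x) / sinh (f x))) x)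
    (hsinh : sinh (f x) ≠ 0) :
    HasDerivAt (catenaryFirstIntegral k f f') 0 x := by
  have hpos : 0 < 1 + f' x ^ 2 := by positivity
  have hsq : √(1 + f' x ^ 2) ^ 2 = 1 + f' x ^ 2 := sq_sqrt hpos.le
  refine ((hf.sinh.fun_pow k).fun_div (((hf'.fun_pow 2).const_add 1).sqrt hpos.ne')
    (sqrt_pos.2 hpos).ne').congr_deriv ?_
  rcases k with _ | k
  · simp
  · field_simp
    rw [hsq, Nat.add_sub_cancel]
    ring

theorem continuousOn_catenaryFirstIntegral {f f' : ℝ → ℝ} {I : Set ℝ} (k : ℕ)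
    (hf : ∀ t ∈ I, DifferentiableAt ℝ f t) (hf' : ∀ t ∈ I, DifferentiableAt ℝ f' t) :
    ContinuousOn (catenaryFirstIntegral k f f') I := fun t ht => by
  have := (hf t ht).continuousAt
  have := (hf' t ht).continuousAt
  exact (ContinuousAt.div (f := fun t => sinh (f t) ^ k) (g := fun t => √(1 + f' t ^ 2))
    (by fun_prop) (by fun_prop) (sqrt_pos.2 (by positivity)).ne').continuousWithinAt

theorem isOpen_inter_catenaryFirstIntegral_preimage {f f' : ℝ → ℝ} {I : Set ℝ} {k : ℕ} {c : ℝ}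
    (hI : IsOpen I) (hk : k ≠ 0) (hc : c ≠ 0)
    (hsol : ∀ t ∈ I, HasDerivAt f (f' t) t ∧
      HasDerivAt f' (k * (1 + f' t ^ 2) * (cosh (f t) / sinh (f t))) t) :
    IsOpen (I ∩ catenaryFirstIntegral k f f' ⁻¹' {c}) := by
  set V := I ∩ (fun t => sinh (f t)) ⁻¹' {0}ᶜ
  have hV : IsOpen V := (continuous_sinh.comp_continuousOn fun t ht =>
    (hsol t ht).1.continuousAt.continuousWithinAt).isOpen_inter_preimage hI isOpen_compl_singleton
  have hderiv : ∀ t ∈ V, HasDerivAt (catenaryFirstIntegral k f f') 0 t := fun t ⟨ht, hs⟩ =>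
    hasDerivAt_catenaryFirstIntegral k (hsol t ht).1 (hsol t ht).2 hs
  have hsinh : ∀ t, catenaryFirstIntegral k f f' t = c → sinh (f t) ≠ 0 := fun t ht hs => by
    simp [catenaryFirstIntegral, hs, zero_pow hk, hc.symm] at ht
  have hlevel : I ∩ catenaryFirstIntegral k f f' ⁻¹' {c} =
      V ∩ catenaryFirstIntegral k f f' ⁻¹' {c} := by
    ext t
    exact ⟨fun ⟨ht, hct⟩ => ⟨⟨ht, hsinh t hct⟩, hct⟩, fun ⟨⟨ht, _⟩, hct⟩ => ⟨ht, hct⟩⟩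
  rw [hlevel]
  exact hV.isOpen_inter_preimage_of_deriv_eq_zero
    (fun t ht => (hderiv t ht).differentiableAt.differentiableWithinAt)
    (fun t ht => (hderiv t ht).deriv) {c}

theorem IsPreconnected.subset_preimage_singleton_of_isOpen {X Y : Type*} [TopologicalSpace X]
    [TopologicalSpace Y] [T1Space Y] {s : Set X} {g : X → Y} {c : Y} (hs : IsPreconnected s)
    (hg : ContinuousOn g s) (hopen : IsOpen (s ∩ g ⁻¹' {c}))
    (hne : (s ∩ g ⁻¹' {c}).Nonempty) : s ⊆ g ⁻¹' {c} := by
  refine (hs.subset_of_closure_inter_subset hopen (by rwa [← inter_assoc, inter_self])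
    fun x ⟨hxcl, hx⟩ => ⟨hx, ?_⟩).trans inter_subset_right
  simpa using ((hg x hx).mono inter_subset_left).mem_closure (t := {c}) hxcl fun y hy => hy.2

/-- First integral of the catenary equation: along the maximal solution one has
`sinh^{n-1}(f(a,t)) = sinh^{n-1}(a) · √(1 + f_t(a,t)²)` for all `t ∈ I_a`,
i.e. `sinh^{n-1}(f(a,t)) / √(1 + f_t(a,t)²)` is constant. -/
theorem catenary_first_integral (n : ℕ) (hn : 2 ≤ n) (a : ℝ) (ha : 0 < a) (f : ℝ → ℝ)
    (hf : IsCatenarySolOn n a (Set.Ioo (-(T n a)) (T n a)) f) :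
    ∀ t ∈ Set.Ioo (-(T n a)) (T n a),
      Real.sinh (f t) ^ (n - 1) =
        Real.sinh a ^ (n - 1) * Real.sqrt (1 + deriv f t ^ 2) := by
  obtain ⟨h0, hfa, hf'0, hode⟩ := hf
  have hk : ((n : ℝ) - 1) = ((n - 1 : ℕ) : ℝ) := by rw [Nat.cast_sub (by omega)]; simp
  rw [hk] at hode
  have hc : sinh a ^ (n - 1) ≠ 0 := (pow_pos (sinh_pos_iff.2 ha) _).ne'
  have hconst := isPreconnected_Ioo.subset_preimage_singleton_of_isOpen
    (continuousOn_catenaryFirstIntegral (n - 1) (fun t ht => (hode t ht).1.differentiableAt)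
      (fun t ht => (hode t ht).2.differentiableAt))
    (isOpen_inter_catenaryFirstIntegral_preimage isOpen_Ioo (by omega) hc hode)
    ⟨0, h0, by simp [catenaryFirstIntegral, hfa, hf'0]⟩
  intro t ht
  rw [← div_eq_iff (sqrt_pos.2 (by positivity)).ne']
  exact hconst ht
end

section
/- Let n ≥ 2 be an integer. The function a ↦ h_R(a) := 2·T(a) = 2·sinh^{n−1}(a) · ∫_a^∞ (sinh^{2n−2}(u) − sinh^{2n−2}(a))^{−1/2} du is strictly increasing on (0, ∞). -/
open Real MeasureTheory Set

theorem setIntegral_lt_setIntegral_of_forall_lt {X : Type*} [MeasurableSpace X] {μ : Measure X}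
    {s : Set X} {f g : X → ℝ} (hs : MeasurableSet s) (hμ : μ s ≠ 0) (hf : IntegrableOn f s μ)
    (hg : IntegrableOn g s μ) (hlt : ∀ x ∈ s, f x < g x) :
    ∫ x in s, f x ∂μ < ∫ x in s, g x ∂μ := by
  rw [← sub_pos, ← integral_sub hg hf]
  have hnonneg : 0 ≤ᵐ[μ.restrict s] fun x => g x - f x :=
    (ae_restrict_iff' hs).2 <| ae_of_all _ fun x hx => sub_nonneg.2 (hlt x hx).le
  have hsupport : (Function.support fun x => g x - f x) ∩ s = s :=
    inter_eq_right.2 fun x hx => (sub_pos.2 (hlt x hx)).ne'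
  rw [setIntegral_pos_iff_support_of_nonneg_ae hnonneg (hg.sub hf), hsupport]
  exact pos_iff_ne_zero.2 hμ

theorem setIntegral_Ioi_comp_add_right {E : Type*} [NormedAddCommGroup E] [NormedSpace ℝ E]
    (f : ℝ → E) (a : ℝ) : ∫ x in Ioi 0, f (x + a) = ∫ x in Ioi a, f x := by
  have h := (measurePreserving_add_right volume a).setIntegral_preimage_emb
    (measurableEmbedding_addRight a) f (Ioi a)
  rwa [preimage_add_const_Ioi, sub_self] at h

theorem mul_rpow_neg_half_of_sq_mul {x y : ℝ} (hx : 0 < x) (hy : 0 ≤ y) :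
    x * (x ^ 2 * y) ^ (-(1 : ℝ) / 2) = y ^ (-(1 : ℝ) / 2) := by
  rw [mul_rpow (sq_nonneg x) hy, ← mul_assoc, neg_div, rpow_neg (sq_nonneg x),
    ← sqrt_eq_rpow, sqrt_sq hx.le, mul_inv_cancel₀ hx.ne', one_mul]

theorem sinh_mul_sinh_add_lt {a b s : ℝ} (hab : a < b) (hs : 0 < s) :
    sinh a * sinh (s + b) < sinh b * sinh (s + a) := by
  -- the difference of the two sides is `sinh s * sinh (b - a)`
  have hba : 0 < sinh (b - a) := sinh_pos_iff.2 (sub_pos.2 hab)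
  have hs' : 0 < sinh s := sinh_pos_iff.2 hs
  rw [sinh_sub] at hba
  rw [sinh_add, sinh_add]
  nlinarith [mul_pos hs' hba]

theorem sinh_add_div_sinh_lt {a b s : ℝ} (ha : 0 < a) (hab : a < b) (hs : 0 < s) :
    sinh (s + b) / sinh b < sinh (s + a) / sinh a := by
  rw [div_lt_div_iff₀ (sinh_pos_iff.2 (ha.trans hab)) (sinh_pos_iff.2 ha), mul_comm,
    mul_comm (sinh (s + a))]
  exact sinh_mul_sinh_add_lt hab hs

theorem exp_le_sinh_add_div_sinh {a s : ℝ} (ha : 0 < a) (hs : 0 ≤ s) :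
    exp s ≤ sinh (s + a) / sinh a := by
  have hsinh_a : 0 < sinh a := sinh_pos_iff.2 ha
  rw [le_div_iff₀ hsinh_a, sinh_add, ← cosh_add_sinh, add_mul]
  nlinarith [sinh_nonneg_iff.2 hs, (sinh_lt_cosh a).le]

theorem one_le_sinh_add_div_sinh {a s : ℝ} (ha : 0 < a) (hs : 0 ≤ s) :
    1 ≤ sinh (s + a) / sinh a :=
  (one_le_exp hs).trans (exp_le_sinh_add_div_sinh ha hs)

theorem strictAntiOn_pow_sub_one_rpow_neg_half {m : ℕ} (hm : m ≠ 0) :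
    StrictAntiOn (fun r : ℝ => (r ^ (2 * m) - 1) ^ (-(1 : ℝ) / 2)) (Ioi 1) := by
  intro r hr r' _ hrr'
  have h2m : 2 * m ≠ 0 := by omega
  refine rpow_lt_rpow_of_neg (sub_pos.2 (one_lt_pow₀ hr h2m)) ?_ (by norm_num)
  exact sub_lt_sub_right (pow_lt_pow_left₀ hrr' (zero_le_one.trans hr.le) h2m) 1

theorem mul_exp_le_exp_sq_sub_one {s : ℝ} (hs : 0 ≤ s) : s * exp s ≤ exp s ^ 2 - 1 := by
  have hsinh : s ≤ sinh s := self_le_sinh_iff.2 hs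
  have hsq : exp s ^ 2 - 1 = 2 * sinh s * exp s := by
    rw [sinh_eq, exp_neg]
    field_simp
  rw [hsq]
  nlinarith [exp_pos s]

/-- The integrand of `T` after the substitution `u = s + a` and normalisation by `sinh a`. -/
noncomputable def heightIntegrand (m : ℕ) (a s : ℝ) : ℝ :=
  ((sinh (s + a) / sinh a) ^ (2 * m) - 1) ^ (-(1 : ℝ) / 2)

section heightIntegrand

variable {m : ℕ} {a s : ℝ}

theorem heightIntegrand_nonneg (ha : 0 < a) (hs : 0 ≤ s) : 0 ≤ heightIntegrand m a s :=
  rpow_nonneg (sub_nonneg.2 (one_le_pow₀ (one_le_sinh_add_div_sinh ha hs))) _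

theorem heightIntegrand_lt_heightIntegrand {b : ℝ} (hm : m ≠ 0) (ha : 0 < a) (hab : a < b)
    (hs : 0 < s) : heightIntegrand m a s < heightIntegrand m b s := by
  have hratio : ∀ c, 0 < c → 1 < sinh (s + c) / sinh c := fun c hc =>
    (one_lt_exp_iff.2 hs).trans_le (exp_le_sinh_add_div_sinh hc hs.le)
  exact strictAntiOn_pow_sub_one_rpow_neg_half hm (hratio b (ha.trans hab)) (hratio a ha)
    (sinh_add_div_sinh_lt ha hab hs)

theorem heightIntegrand_le (hm : m ≠ 0) (ha : 0 < a) (hs : 0 < s) :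
    heightIntegrand m a s ≤ s ^ (-(1 : ℝ) / 2) * exp (-(1 / 2) * s) := by
  set r := sinh (s + a) / sinh a
  have hr : exp s ≤ r := exp_le_sinh_add_div_sinh ha hs.le
  have hbase : s * exp s ≤ r ^ (2 * m) - 1 := calc
    s * exp s ≤ exp s ^ 2 - 1 := mul_exp_le_exp_sq_sub_one hs.le
    _ ≤ r ^ 2 - 1 := by gcongr
    _ ≤ r ^ (2 * m) - 1 := by
      gcongr
      · exact one_le_sinh_add_div_sinh ha hs.le
      · omega
  calc heightIntegrand m a s ≤ (s * exp s) ^ (-(1 : ℝ) / 2) :=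
        rpow_le_rpow_of_nonpos (by positivity) hbase (by norm_num)
    _ = s ^ (-(1 : ℝ) / 2) * exp (-(1 / 2) * s) := by
        rw [mul_rpow hs.le (exp_pos s).le, ← exp_mul]
        ring_nf

theorem integrableOn_heightIntegrand (hm : m ≠ 0) (ha : 0 < a) :
    IntegrableOn (heightIntegrand m a) (Ioi 0) := by
  have hdom : IntegrableOn (fun s : ℝ => s ^ (-(1 : ℝ) / 2) * exp (-(1 / 2) * s)) (Ioi 0) := by
    simpa only [rpow_one] using
      integrableOn_rpow_mul_exp_neg_mul_rpow (s := -(1 : ℝ) / 2) (by norm_num) one_pos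
        (by norm_num : (0 : ℝ) < 1 / 2)
  have hmeas : Measurable (heightIntegrand m a) := by unfold heightIntegrand; fun_prop
  refine hdom.mono' hmeas.aestronglyMeasurable ?_
  refine (ae_restrict_iff' measurableSet_Ioi).2 (ae_of_all _ fun s hs => ?_)
  rw [norm_of_nonneg (heightIntegrand_nonneg ha (le_of_lt hs))]
  exact heightIntegrand_le hm ha hs

end heightIntegrand

theorem T_eq_integral_heightIntegrand (n : ℕ) {a : ℝ} (ha : 0 < a) :
    T n a = ∫ s in Ioi 0, heightIntegrand (n - 1) a s := by
  have hsinh_a : 0 < sinh a := sinh_pos_iff.2 ha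
  rw [T, ← integral_const_mul, ← setIntegral_Ioi_comp_add_right]
  refine setIntegral_congr_fun measurableSet_Ioi fun s hs => ?_
  have hfactor : sinh (s + a) ^ (2 * n - 2) - sinh a ^ (2 * n - 2)
      = (sinh a ^ (n - 1)) ^ 2 * ((sinh (s + a) / sinh a) ^ (2 * (n - 1)) - 1) := by
    rw [show 2 * n - 2 = 2 * (n - 1) by omega, div_pow, ← pow_mul, mul_comm (n - 1) 2]
    field_simp
  rw [hfactor, mul_rpow_neg_half_of_sq_mul (pow_pos hsinh_a _)
    (sub_nonneg.2 (one_le_pow₀ (one_le_sinh_add_div_sinh ha (le_of_lt hs)))), heightIntegrand]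

/-- The vertical height `h_R(a) = 2·T(a)` of the rotational minimal `n`-catenoid
is a strictly increasing function of `a` on `(0, ∞)`. -/
theorem height_strictMono (n : ℕ) (hn : 2 ≤ n) :
    StrictMonoOn (fun a : ℝ => 2 * T n a) (Set.Ioi (0 : ℝ)) := by
  have hm : n - 1 ≠ 0 := by omega
  intro a ha b hb hab
  have hT : T n a < T n b := by
    rw [T_eq_integral_heightIntegrand n ha, T_eq_integral_heightIntegrand n hb]
    exact setIntegral_lt_setIntegral_of_forall_lt measurableSet_Ioi (by simp)
      (integrableOn_heightIntegrand hm ha) (integrableOn_heightIntegrand hm hb)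
      fun s hs => heightIntegrand_lt_heightIntegrand hm ha hab hs
  exact mul_lt_mul_of_pos_left hT two_pos
end

section
/- Let n ≥ 2 be an integer. Then 2·T(a) = 2·sinh^{n−1}(a) · ∫_a^∞ (sinh^{2n−2}(u) − sinh^{2n−2}(a))^{−1/2} du tends to π/(n−1) as a → +∞. -/
open Real MeasureTheory Set Filter Topology

namespace Real

theorem tanh_eq_one_sub_two_div (x : ℝ) : tanh x = 1 - 2 / (exp (2 * x) + 1) := by
  have h : exp (2 * x) = exp x / exp (-x) := by rw [← exp_sub]; ring_nf
  rw [tanh_eq, h]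
  field_simp
  ring

theorem tendsto_tanh_atTop : Tendsto tanh atTop (𝓝 1) := by
  have hden : Tendsto (fun x : ℝ => exp (2 * x) + 1) atTop atTop :=
    tendsto_atTop_add_const_right _ 1
      (tendsto_exp_atTop.comp (tendsto_id.const_mul_atTop two_pos))
  have := (tendsto_const_nhds (x := (2 : ℝ)).div_atTop hden).const_sub (1 : ℝ)
  rw [sub_zero] at this
  exact this.congr fun x => (tanh_eq_one_sub_two_div x).symm

theorem continuous_tanh : Continuous tanh := by
  rw [show tanh = sinh / cosh from funext tanh_eq_sinh_div_cosh]
  exact continuous_sinh.div continuous_cosh fun x => (cosh_pos x).ne'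

theorem tanh_monotone : Monotone tanh := by
  intro x y hxy
  rw [tanh_eq_sinh_div_cosh, tanh_eq_sinh_div_cosh,
    div_le_div_iff₀ (cosh_pos x) (cosh_pos y)]
  have : sinh (x - y) ≤ 0 := sinh_nonpos_iff.mpr (sub_nonpos.mpr hxy)
  rw [sinh_sub] at this
  linarith

theorem tendsto_sinh_atTop : Tendsto sinh atTop atTop :=
  tendsto_atTop_mono' atTop ((eventually_ge_atTop 0).mono fun _ hx => self_le_sinh_iff.mpr hx)
    tendsto_id

end Real

theorem setIntegral_mul_mem_Icc {α : Type*} [MeasurableSpace α] {μ : Measure α} {s : Set α}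
    {w g : α → ℝ} {c d : ℝ} (hs : MeasurableSet s) (hg : IntegrableOn g s μ)
    (hg₀ : ∀ x ∈ s, 0 ≤ g x) (hw : AEStronglyMeasurable w (μ.restrict s))
    (hwc : ∀ x ∈ s, c ≤ w x) (hwd : ∀ x ∈ s, w x ≤ d) :
    ∫ x in s, w x * g x ∂μ ∈ Icc (c * ∫ x in s, g x ∂μ) (d * ∫ x in s, g x ∂μ) := by
  have hwg : IntegrableOn (fun x => w x * g x) s μ := by
    refine hg.bdd_mul hw (c := max |c| |d|) ?_
    filter_upwards [ae_restrict_mem hs] with x hx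
    exact abs_le_max_abs_abs (hwc x hx) (hwd x hx)
  rw [← integral_const_mul, ← integral_const_mul]
  exact ⟨setIntegral_mono_on (hg.const_mul c) hwg hs fun x hx =>
      mul_le_mul_of_nonneg_right (hwc x hx) (hg₀ x hx),
    setIntegral_mono_on hwg (hg.const_mul d) hs fun x hx =>
      mul_le_mul_of_nonneg_right (hwd x hx) (hg₀ x hx)⟩

theorem hasDerivAt_neg_arcsin_div {f : ℝ → ℝ} {f' s u : ℝ} (hs : 0 < s) (hsu : s < f u)
    (hf : HasDerivAt f f' u) :
    HasDerivAt (fun x => -arcsin (s / f x)) (s * f' / (f u * √(f u ^ 2 - s ^ 2))) u := by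
  have hfu : 0 < f u := hs.trans hsu
  have hq : s / f u < 1 := (div_lt_one hfu).mpr hsu
  have hdiff : 0 < f u ^ 2 - s ^ 2 := by nlinarith
  have hsqrt : √(1 - (s / f u) ^ 2) = √(f u ^ 2 - s ^ 2) / f u := by
    rw [← sqrt_sq hfu.le, ← sqrt_div' _ (sq_nonneg _), sqrt_sq hfu.le]
    congr 1
    field_simp
  refine ((hasDerivAt_arcsin (by linarith [div_pos hs hfu]) hq.ne).comp u
    ((hasDerivAt_const u s).div hf hfu.ne')).neg.congr_deriv ?_
  rw [hsqrt]
  field_simp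
  ring

theorem integrableOn_and_integral_Ioi_arcsec {f f' : ℝ → ℝ} {a : ℝ} (hfa : 0 < f a)
    (hcont : ContinuousWithinAt f (Ici a) a) (hderiv : ∀ u ∈ Ioi a, HasDerivAt f (f' u) u)
    (hf' : ∀ u ∈ Ioi a, 0 ≤ f' u) (hlt : ∀ u ∈ Ioi a, f a < f u)
    (htop : Tendsto f atTop atTop) :
    IntegrableOn (fun u => f a * f' u / (f u * √(f u ^ 2 - f a ^ 2))) (Ioi a) ∧
      ∫ u in Ioi a, f a * f' u / (f u * √(f u ^ 2 - f a ^ 2)) = π / 2 := by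
  set F : ℝ → ℝ := fun x => -arcsin (f a / f x)
  have hF : ContinuousWithinAt F (Ici a) a :=
    (continuous_arcsin.continuousAt.comp_continuousWithinAt
      (continuousWithinAt_const.div hcont hfa.ne')).neg
  have hderivF : ∀ u ∈ Ioi a, HasDerivAt F (f a * f' u / (f u * √(f u ^ 2 - f a ^ 2))) u :=
    fun u hu => hasDerivAt_neg_arcsin_div hfa (hlt u hu) (hderiv u hu)
  have hnonneg : ∀ u ∈ Ioi a, 0 ≤ f a * f' u / (f u * √(f u ^ 2 - f a ^ 2)) := fun u hu =>
    div_nonneg (mul_nonneg hfa.le (hf' u hu))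
      (mul_nonneg (hfa.trans (hlt u hu)).le (sqrt_nonneg _))
  have hFtop : Tendsto F atTop (𝓝 0) := by
    have := ((continuous_arcsin.tendsto 0).comp
      (tendsto_const_nhds (x := f a).div_atTop htop)).neg
    rwa [arcsin_zero, neg_zero] at this
  refine ⟨integrableOn_Ioi_deriv_of_nonneg hF hderivF hnonneg hFtop, ?_⟩
  rw [integral_Ioi_of_hasDerivAt_of_nonneg hF hderivF hnonneg hFtop]
  simp [F, div_self hfa.ne']

theorem sinh_pow_mul_rpow_eq {m : ℕ} {a u : ℝ} (hm : m ≠ 0) (ha : 0 < a) (hu : a < u) :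
    sinh a ^ m * (sinh u ^ (2 * m) - sinh a ^ (2 * m)) ^ (-(1 : ℝ) / 2) =
      tanh u / m * (sinh a ^ m * (m * sinh u ^ (m - 1) * cosh u) /
        (sinh u ^ m * √((sinh u ^ m) ^ 2 - (sinh a ^ m) ^ 2))) := by
  have hsa : 0 < sinh a := sinh_pos_iff.mpr ha
  have hsu : 0 < sinh u := sinh_pos_iff.mpr (ha.trans hu)
  have hlt : sinh a ^ m < sinh u ^ m := pow_lt_pow_left₀ (sinh_lt_sinh.mpr hu) hsa.le hm
  have hdiff : 0 < (sinh u ^ m) ^ 2 - (sinh a ^ m) ^ 2 := by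
    nlinarith [pow_pos hsa m]
  have hpow : sinh u ^ m = sinh u ^ (m - 1) * sinh u := by
    rw [← pow_succ, Nat.sub_add_cancel (Nat.one_le_iff_ne_zero.mpr hm)]
  rw [pow_mul', pow_mul', neg_div, rpow_neg hdiff.le, ← sqrt_eq_rpow, tanh_eq_sinh_div_cosh]
  have hsqrt := sqrt_pos.mpr hdiff
  have hcosh := cosh_pos u
  rw [hpow]
  field_simp

theorem two_mul_T_mem_Icc {n : ℕ} {a : ℝ} (hn : 2 ≤ n) (ha : 0 < a) :
    2 * T n a ∈ Icc (tanh a * (π / (n - 1))) (π / (n - 1)) := by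
  obtain ⟨m, rfl⟩ : ∃ m, n = m + 1 := ⟨n - 1, by omega⟩
  have hm : m ≠ 0 := by omega
  have hsa : 0 < sinh a := sinh_pos_iff.mpr ha
  have hderiv : ∀ u, HasDerivAt (fun x => sinh x ^ m) (m * sinh u ^ (m - 1) * cosh u) u :=
    fun u => (hasDerivAt_sinh u).pow m
  obtain ⟨hint, hval⟩ := integrableOn_and_integral_Ioi_arcsec (f := fun u => sinh u ^ m)
    (a := a) (pow_pos hsa m) (continuous_sinh.pow m).continuousWithinAt (fun u _ => hderiv u)
    (fun u hu => by have := sinh_pos_iff.mpr (ha.trans hu); positivity)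
    (fun u hu => pow_lt_pow_left₀ (sinh_lt_sinh.mpr hu) hsa.le hm)
    ((tendsto_pow_atTop hm).comp tendsto_sinh_atTop)
  have hT : T (m + 1) a = ∫ u in Ioi a, tanh u / m *
      (sinh a ^ m * (m * sinh u ^ (m - 1) * cosh u) /
        (sinh u ^ m * √((sinh u ^ m) ^ 2 - (sinh a ^ m) ^ 2))) := by
    rw [T, show m + 1 - 1 = m by omega, show 2 * (m + 1) - 2 = 2 * m by omega,
      ← integral_const_mul]
    exact setIntegral_congr_fun measurableSet_Ioi fun u hu => sinh_pow_mul_rpow_eq hm ha hu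
  have hmem := setIntegral_mul_mem_Icc measurableSet_Ioi hint
    (fun u hu => by have := sinh_pos_iff.mpr (ha.trans hu); positivity)
    ((continuous_tanh.div_const _).aestronglyMeasurable)
    (fun u hu => div_le_div_of_nonneg_right (tanh_monotone hu.le) m.cast_nonneg)
    (fun u _ => div_le_div_of_nonneg_right (tanh_lt_one u).le m.cast_nonneg)
  rw [← hT, hval] at hmem
  push_cast
  rw [add_sub_cancel_right, show tanh a * (π / m) = 2 * (tanh a / m * (π / 2)) by ring,
    show π / m = 2 * (1 / m * (π / 2)) by ring]
  exact ⟨by linarith [hmem.1], by linarith [hmem.2]⟩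

/-- The height `2·T(a)` of the rotational minimal `n`-catenoid tends to
`π/(n−1)` as `a → +∞`. -/
theorem height_tendsto_pi_div (n : ℕ) (hn : 2 ≤ n) :
    Filter.Tendsto (fun a : ℝ => 2 * T n a) Filter.atTop
      (nhds (Real.pi / ((n : ℝ) - 1))) := by
  have hlow : Tendsto (fun a => tanh a * (π / (n - 1))) atTop (𝓝 (π / (n - 1))) := by
    simpa using tendsto_tanh_atTop.mul_const (π / ((n : ℝ) - 1))
  refine tendsto_of_tendsto_of_tendsto_of_le_of_le' hlow tendsto_const_nhds ?_ ?_ <;>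
    filter_upwards [eventually_gt_atTop 0] with a ha
  exacts [(two_mul_T_mem_Icc hn ha).1, (two_mul_T_mem_Icc hn ha).2]
end

section
/- The function H(d) = ∫_{arccosh(d)}^∞ d/√(cosh²(u) − d²) du, defined for d > 1, tends to +∞ as d → 1⁺. -/
/-- `arccosh`, the inverse of `cosh` on `[1, ∞)`. -/
noncomputable def arccosh (d : ℝ) : ℝ :=
  Real.log (d + Real.sqrt (d ^ 2 - 1))

/-- `H d = ∫_{arccosh d}^∞ d / √(cosh²(u) − d²) du`, for `d > 1`. -/
noncomputable def H (d : ℝ) : ℝ :=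
  ∫ u in Set.Ioi (arccosh d), d / Real.sqrt (Real.cosh u ^ 2 - d ^ 2)

/-!
Write `d = cosh a`, so that `a = arccosh d → 0⁺` as `d → 1⁺`. Since
`cosh² u - cosh² a = sinh (u + a) sinh (u - a) ≥ (sinh 2a / 2) (u - a) e^(u - a)`, the integrand is
dominated by a multiple of `(u - a)^(-1/2) e^(-(u - a)/2)`; it is therefore integrable (otherwise
the Bochner integral would be the junk value `0`), and `H (cosh a)` dominates the integral over
`(a, 1]`. There `cosh² u - cosh² a ≤ sinh² u ≤ 4u²`, so the integrand is at least `1/(2u)` and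
`H (cosh a) ≥ -log a / 2`.
-/

open Real Set Filter MeasureTheory Topology

lemma cosh_arccosh {d : ℝ} (hd : 1 ≤ d) : cosh (arccosh d) = d := by
  have hs : √(d ^ 2 - 1) ^ 2 = d ^ 2 - 1 := sq_sqrt (by nlinarith)
  have hpos : 0 < d + √(d ^ 2 - 1) := by positivity
  have hinv : (d + √(d ^ 2 - 1))⁻¹ = d - √(d ^ 2 - 1) :=
    inv_eq_of_mul_eq_one_right (by nlinarith)
  rw [arccosh, cosh_log hpos, hinv]
  ring

lemma arccosh_cosh {a : ℝ} (ha : 0 ≤ a) : arccosh (cosh a) = a := by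
  rw [arccosh, ← sinh_sq, sqrt_sq (sinh_nonneg_iff.2 ha), cosh_add_sinh, log_exp]

lemma arccosh_pos {d : ℝ} (hd : 1 < d) : 0 < arccosh d :=
  log_pos (by linarith [sqrt_nonneg (d ^ 2 - 1)])

lemma tendsto_arccosh_nhdsGT_one : Tendsto arccosh (𝓝[>] 1) (𝓝[>] 0) := by
  have hcont : ContinuousAt arccosh 1 := by
    unfold arccosh
    exact ContinuousAt.log (by fun_prop) (by norm_num)
  have h0 : arccosh 1 = 0 := by simp [arccosh]
  refine tendsto_nhdsWithin_iff.2 ⟨?_, eventually_mem_nhdsWithin.mono fun d hd => arccosh_pos hd⟩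
  exact h0 ▸ hcont.continuousWithinAt.tendsto

lemma cosh_sq_sub_cosh_sq (u a : ℝ) :
    cosh u ^ 2 - cosh a ^ 2 = sinh (u + a) * sinh (u - a) := by
  rw [sinh_add, sinh_sub]
  linear_combination cosh u ^ 2 * sinh_sq a - cosh a ^ 2 * sinh_sq u

lemma abs_sinh_le_two_mul_abs {u : ℝ} (hu : |u| ≤ 1) : |sinh u| ≤ 2 * |u| := by
  have h₁ := abs_le.1 (abs_exp_sub_one_le hu)
  have h₂ := abs_le.1 (abs_exp_sub_one_le (x := -u) (by rwa [abs_neg]))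
  rw [abs_neg] at h₂
  rw [sinh_eq, abs_le]
  constructor <;> linarith [h₁.1, h₁.2, h₂.1, h₂.2]

lemma mul_exp_le_cosh_sq_sub_cosh_sq {u a : ℝ} (ha : 0 ≤ a) (hu : a ≤ u) :
    sinh (2 * a) / 2 * ((u - a) * exp (u - a)) ≤ cosh u ^ 2 - cosh a ^ 2 := by
  have ht : 0 ≤ u - a := by linarith
  have hsinh : u - a ≤ sinh (u - a) := self_le_sinh_iff.2 ht
  have hcosh : exp (u - a) / 2 ≤ cosh (u - a) := by
    rw [cosh_eq]; linarith [exp_pos (-(u - a))]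
  have hplus : sinh (2 * a) * cosh (u - a) ≤ sinh (u + a) := by
    rw [show u + a = (u - a) + 2 * a by ring, sinh_add]
    nlinarith [sinh_nonneg_iff.2 ht, cosh_pos (2 * a)]
  have h2a : 0 ≤ sinh (2 * a) := sinh_nonneg_iff.2 (by linarith)
  rw [cosh_sq_sub_cosh_sq]
  calc sinh (2 * a) / 2 * ((u - a) * exp (u - a))
      = sinh (2 * a) * (exp (u - a) / 2) * (u - a) := by ring
    _ ≤ sinh (2 * a) * cosh (u - a) * sinh (u - a) := by gcongr
    _ ≤ sinh (u + a) * sinh (u - a) := by gcongr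

lemma integrableOn_sub_rpow_mul_exp {s b : ℝ} (hs : -1 < s) (hb : 0 < b) (a : ℝ) :
    IntegrableOn (fun u => (u - a) ^ s * exp (-b * (u - a))) (Ioi a) := by
  have h := integrableOn_rpow_mul_exp_neg_mul_rpow hs one_pos hb
  simp only [rpow_one] at h
  rw [← (measurePreserving_sub_right volume a).integrableOn_comp_preimage
    (measurableEmbedding_subRight a)] at h
  rwa [preimage_sub_const_Ioi, zero_add] at h

lemma integrableOn_cosh_div_sqrt {a : ℝ} (ha : 0 < a) :
    IntegrableOn (fun u => cosh a / √(cosh u ^ 2 - cosh a ^ 2)) (Ioi a) := by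
  set K := sinh (2 * a) / 2
  have hK : 0 < K := by have := sinh_pos_iff.2 (by linarith : 0 < 2 * a); positivity
  refine ((integrableOn_sub_rpow_mul_exp (s := -(1 / 2)) (b := 1 / 2) (by norm_num)
    (by norm_num) a).const_mul (cosh a / √K)).mono'
    (by fun_prop : Measurable _).aestronglyMeasurable ?_
  refine (ae_restrict_iff' measurableSet_Ioi).2 (Eventually.of_forall fun u (hu : a < u) => ?_)
  have ht : 0 < u - a := sub_pos.2 hu
  have hX := mul_exp_le_cosh_sq_sub_cosh_sq ha.le hu.le
  have hmaj : cosh a / √K * ((u - a) ^ (-(1 / 2 : ℝ)) * exp (-(1 / 2) * (u - a)))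
      = cosh a / √(K * ((u - a) * exp (u - a))) := by
    rw [rpow_neg ht.le, ← sqrt_eq_rpow, sqrt_mul hK.le, sqrt_mul ht.le, ← exp_half,
      show -(1 / 2) * (u - a) = -((u - a) / 2) by ring, exp_neg]
    field_simp
  rw [norm_of_nonneg (by positivity), hmaj]
  gcongr

lemma inv_two_mul_le_cosh_div_sqrt {u a : ℝ} (ha : 0 ≤ a) (hu : a < u) (hu₁ : u ≤ 1) :
    (2 * u)⁻¹ ≤ cosh a / √(cosh u ^ 2 - cosh a ^ 2) := by
  have hu₀ : 0 < u := ha.trans_lt hu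
  have hlt : cosh a < cosh u := cosh_lt_cosh.2 (by rwa [abs_of_nonneg ha, abs_of_pos hu₀])
  have hX : 0 < cosh u ^ 2 - cosh a ^ 2 := by nlinarith [cosh_pos a]
  have hsinh : |sinh u| ≤ 2 * u := by
    simpa [abs_of_pos hu₀] using abs_sinh_le_two_mul_abs (u := u) (by rwa [abs_of_pos hu₀])
  have hle : cosh u ^ 2 - cosh a ^ 2 ≤ (2 * u) ^ 2 := by
    nlinarith [sinh_sq u, one_le_cosh a, sq_abs (sinh u), abs_nonneg (sinh u)]
  calc (2 * u)⁻¹ ≤ (√(cosh u ^ 2 - cosh a ^ 2))⁻¹ := by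
        gcongr
        exact (sqrt_le_left (by positivity)).2 hle
    _ ≤ cosh a / √(cosh u ^ 2 - cosh a ^ 2) := by
        rw [inv_eq_one_div]
        gcongr
        exact one_le_cosh a

lemma neg_log_div_two_le_H_cosh {a : ℝ} (ha₀ : 0 < a) (ha₁ : a ≤ 1) :
    -log a / 2 ≤ H (cosh a) := by
  have hint := integrableOn_cosh_div_sqrt ha₀
  have hinv : IntegrableOn (fun u : ℝ => (2 * u)⁻¹) (Ioc a 1) :=
    (ContinuousOn.integrableOn_Icc (ContinuousOn.inv₀ (by fun_prop)
      fun u hu => (mul_pos two_pos (ha₀.trans_le hu.1)).ne')).mono_set Ioc_subset_Icc_self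
  rw [H, arccosh_cosh ha₀.le]
  calc -log a / 2 = ∫ u in Ioc a 1, (2 * u)⁻¹ := by
        simp_rw [mul_inv, integral_const_mul, ← intervalIntegral.integral_of_le ha₁,
          integral_inv_of_pos ha₀ one_pos, one_div, log_inv]
        ring
    _ ≤ ∫ u in Ioc a 1, cosh a / √(cosh u ^ 2 - cosh a ^ 2) :=
        setIntegral_mono_on hinv (hint.mono_set Ioc_subset_Ioi_self) measurableSet_Ioc
          fun u hu => inv_two_mul_le_cosh_div_sqrt ha₀.le hu.1 hu.2
    _ ≤ ∫ u in Ioi a, cosh a / √(cosh u ^ 2 - cosh a ^ 2) :=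
        setIntegral_mono_set hint (Eventually.of_forall fun u => by positivity)
          Ioc_subset_Ioi_self.eventuallyLE

lemma tendsto_H_cosh_nhdsGT_zero : Tendsto (fun a => H (cosh a)) (𝓝[>] 0) atTop := by
  have hlog : Tendsto (fun a => -log a / 2) (𝓝[>] 0) atTop :=
    (tendsto_neg_atBot_atTop.comp tendsto_log_nhdsGT_zero).atTop_div_const two_pos
  refine tendsto_atTop_mono' _ ?_ hlog
  filter_upwards [Ioc_mem_nhdsGT one_pos] with a ha
  exact neg_log_div_two_le_H_cosh ha.1 ha.2

/-- `H(d)` tends to `+∞` as `d → 1⁺`. -/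
theorem H_tendsto_atTop :
    Filter.Tendsto H (nhdsWithin 1 (Set.Ioi 1)) Filter.atTop := by
  refine (tendsto_H_cosh_nhdsGT_zero.comp tendsto_arccosh_nhdsGT_one).congr' ?_
  filter_upwards [self_mem_nhdsWithin] with d (hd : 1 < d)
  exact congrArg H (cosh_arccosh hd.le)
end

section
/- The function H(d) = ∫_{arccosh(d)}^∞ d/√(cosh²(u) − d²) du, defined for d > 1, tends to π/2 as d → +∞. -/
/-!
Write `d = cosh a` and `ε = e^{-2a}`. With `x = e^{2(u-a)}` one has
`cosh² u - cosh² a = (e^a / 2)² ((x - 1) - ε² (1 - 1/x))`, and `0 ≤ 1 - 1/x ≤ x - 1`, so the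
integrand of `H (cosh a)` lies between `(1 + ε) / √(x - 1)` and `(1 + ε) / √(1 - ε²) / √(x - 1)`.
Since `∫_a^∞ du / √(e^{2(u-a)} - 1) = π / 2` (an antiderivative is `-arcsin e^{a-u}`),
`H (cosh a)` is squeezed between two multiples of `π / 2` whose factors tend to `1` as `a → ∞`.
-/

open Real MeasureTheory Set Filter Topology

lemma integral_mul_le_integral_le_mul {α : Type*} [MeasurableSpace α] {μ : Measure α}
    {f g : α → ℝ} {c₁ c₂ : ℝ} (hf : AEStronglyMeasurable f μ) (hg : Integrable g μ)
    (h₁ : ∀ᵐ x ∂μ, c₁ * g x ≤ f x) (h₂ : ∀ᵐ x ∂μ, f x ≤ c₂ * g x) :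
    c₁ * ∫ x, g x ∂μ ≤ ∫ x, f x ∂μ ∧ ∫ x, f x ∂μ ≤ c₂ * ∫ x, g x ∂μ := by
  have hfi : Integrable f μ := integrable_of_le_of_le hf h₁ h₂ (hg.const_mul c₁) (hg.const_mul c₂)
  rw [← integral_const_mul, ← integral_const_mul]
  exact ⟨integral_mono_ae (hg.const_mul c₁) hfi h₁, integral_mono_ae hfi (hg.const_mul c₂) h₂⟩

lemma tendsto_arcosh_atTop : Tendsto arcosh atTop atTop := by
  refine tendsto_atTop_mono' atTop ?_ tendsto_log_atTop
  filter_upwards [eventually_gt_atTop 0] with x hx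
  exact log_le_log hx (le_add_of_nonneg_right (sqrt_nonneg _))

section ComparisonIntegral

variable (a : ℝ)

lemma hasDerivAt_neg_arcsin_exp_sub {u : ℝ} (hu : a < u) :
    HasDerivAt (fun u ↦ -arcsin (exp (a - u))) (√(exp (2 * (u - a)) - 1))⁻¹ u := by
  have hpos : 0 < exp (a - u) := exp_pos _
  have hlt : exp (a - u) < 1 := exp_lt_one_iff.2 (by linarith)
  have hexp : HasDerivAt (fun u ↦ exp (a - u)) (-exp (a - u)) u := by
    simpa using ((hasDerivAt_id u).const_sub a).exp
  refine ((hasDerivAt_arcsin (by linarith) hlt.ne).comp u hexp).neg.congr_deriv ?_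
  have hinv : exp (a - u) ^ 2 * exp (2 * (u - a)) = 1 := by
    rw [← exp_nat_mul, ← exp_add, ← exp_zero]; push_cast; ring_nf
  have hsq : 1 - exp (a - u) ^ 2 = exp (a - u) ^ 2 * (exp (2 * (u - a)) - 1) := by
    linear_combination -hinv
  rw [hsq, sqrt_mul (by positivity), sqrt_sq hpos.le]
  field_simp

lemma tendsto_neg_arcsin_exp_sub : Tendsto (fun u ↦ -arcsin (exp (a - u))) atTop (𝓝 0) := by
  have h : Tendsto (fun u ↦ exp (a - u)) atTop (𝓝 0) :=
    tendsto_exp_atBot.comp (tendsto_atBot_add_const_left _ a tendsto_neg_atTop_atBot)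
  simpa using (continuous_arcsin.tendsto 0).comp h |>.neg

lemma integrableOn_Ioi_inv_sqrt_exp_sub_one :
    IntegrableOn (fun u ↦ (√(exp (2 * (u - a)) - 1))⁻¹) (Ioi a) :=
  integrableOn_Ioi_deriv_of_nonneg (by fun_prop) (fun _ hu ↦ hasDerivAt_neg_arcsin_exp_sub a hu)
    (fun _ _ ↦ by positivity) (tendsto_neg_arcsin_exp_sub a)

lemma integral_Ioi_inv_sqrt_exp_sub_one :
    ∫ u in Ioi a, (√(exp (2 * (u - a)) - 1))⁻¹ = π / 2 := by
  rw [integral_Ioi_of_hasDerivAt_of_nonneg (by fun_prop)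
    (fun _ hu ↦ hasDerivAt_neg_arcsin_exp_sub a hu) (fun _ _ ↦ by positivity)
    (tendsto_neg_arcsin_exp_sub a)]
  simp

end ComparisonIntegral

lemma cosh_div_sqrt_cosh_sq_sub_cosh_sq (a u : ℝ) :
    cosh a / √(cosh u ^ 2 - cosh a ^ 2) = (1 + exp (-2 * a)) /
      √(exp (2 * (u - a)) - 1 - exp (-2 * a) ^ 2 * (1 - (exp (2 * (u - a)))⁻¹)) := by
  have hE : 0 < exp a / 2 := by positivity
  have h2 : ∀ x, exp (2 * x) = exp x ^ 2 := fun x ↦ by rw [← exp_nat_mul]; norm_num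
  have hu : exp u = exp a * exp (u - a) := by rw [← exp_add]; ring_nf
  have ha : cosh a = exp a / 2 * (1 + exp (-2 * a)) := by
    rw [cosh_eq, neg_mul, exp_neg, exp_neg, h2]
    field_simp
  have hsq : cosh u ^ 2 - cosh a ^ 2 = (exp a / 2) ^ 2 *
      (exp (2 * (u - a)) - 1 - exp (-2 * a) ^ 2 * (1 - (exp (2 * (u - a)))⁻¹)) := by
    rw [cosh_eq, cosh_eq, exp_neg, exp_neg, hu, h2, neg_mul, exp_neg, h2]
    field_simp
    ring
  rw [hsq, sqrt_mul (by positivity), sqrt_sq hE.le, ha, mul_div_mul_left _ _ hE.ne']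

lemma one_add_div_sqrt_bounds {ε x : ℝ} (hε : 0 ≤ ε) (hε1 : ε < 1) (hx : 1 < x) :
    (1 + ε) * (√(x - 1))⁻¹ ≤ (1 + ε) / √(x - 1 - ε ^ 2 * (1 - x⁻¹)) ∧
      (1 + ε) / √(x - 1 - ε ^ 2 * (1 - x⁻¹)) ≤ (1 + ε) / √(1 - ε ^ 2) * (√(x - 1))⁻¹ := by
  have hx0 : 0 < x := by linarith
  have hinv : 0 ≤ 1 - x⁻¹ := sub_nonneg.2 (inv_le_one_of_one_le₀ hx.le)
  have hinv' : 1 - x⁻¹ ≤ x - 1 := by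
    rw [show 1 - x⁻¹ = (x - 1) / x by field_simp]
    exact div_le_self (by linarith) hx.le
  have hlow : (1 - ε ^ 2) * (x - 1) ≤ x - 1 - ε ^ 2 * (1 - x⁻¹) := by nlinarith
  have hupp : x - 1 - ε ^ 2 * (1 - x⁻¹) ≤ x - 1 := by nlinarith
  have hpos : 0 < (1 - ε ^ 2) * (x - 1) := mul_pos (by nlinarith) (by linarith)
  constructor
  · rw [← div_eq_mul_inv]
    exact div_le_div_of_nonneg_left (by positivity) (sqrt_pos.2 (hpos.trans_le hlow))
      (sqrt_le_sqrt hupp)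
  · calc (1 + ε) / √(x - 1 - ε ^ 2 * (1 - x⁻¹))
        ≤ (1 + ε) / √((1 - ε ^ 2) * (x - 1)) :=
          div_le_div_of_nonneg_left (by positivity) (sqrt_pos.2 hpos) (sqrt_le_sqrt hlow)
      _ = (1 + ε) / √(1 - ε ^ 2) * (√(x - 1))⁻¹ := by
          rw [sqrt_mul (by nlinarith), ← div_div, div_eq_mul_inv]

lemma H_cosh_bounds {a : ℝ} (ha : 0 < a) :
    (1 + exp (-2 * a)) * (π / 2) ≤ H (cosh a) ∧
      H (cosh a) ≤ (1 + exp (-2 * a)) / √(1 - exp (-2 * a) ^ 2) * (π / 2) := by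
  have hH : H (cosh a) = ∫ u in Ioi a, cosh a / √(cosh u ^ 2 - cosh a ^ 2) := by
    rw [H, show arccosh = arcosh from rfl, arcosh_cosh ha.le]
  have hε : exp (-2 * a) < 1 := exp_lt_one_iff.2 (by linarith)
  have hbounds : ∀ u ∈ Ioi a,
      (1 + exp (-2 * a)) * (√(exp (2 * (u - a)) - 1))⁻¹ ≤ cosh a / √(cosh u ^ 2 - cosh a ^ 2) ∧
      cosh a / √(cosh u ^ 2 - cosh a ^ 2) ≤
        (1 + exp (-2 * a)) / √(1 - exp (-2 * a) ^ 2) * (√(exp (2 * (u - a)) - 1))⁻¹ := by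
    intro u (hu : a < u)
    rw [cosh_div_sqrt_cosh_sq_sub_cosh_sq]
    exact one_add_div_sqrt_bounds (exp_pos _).le hε (one_lt_exp_iff.2 (by linarith))
  rw [hH, ← integral_Ioi_inv_sqrt_exp_sub_one a]
  exact integral_mul_le_integral_le_mul (by fun_prop : Measurable _).aestronglyMeasurable
    (integrableOn_Ioi_inv_sqrt_exp_sub_one a)
    ((ae_restrict_mem measurableSet_Ioi).mono fun u hu ↦ (hbounds u hu).1)
    ((ae_restrict_mem measurableSet_Ioi).mono fun u hu ↦ (hbounds u hu).2)

lemma tendsto_H_cosh_atTop : Tendsto (fun a ↦ H (cosh a)) atTop (𝓝 (π / 2)) := by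
  have hε : Tendsto (fun a : ℝ ↦ exp (-2 * a)) atTop (𝓝 0) :=
    tendsto_exp_atBot.comp (tendsto_id.const_mul_atTop_of_neg (by norm_num))
  have hlow : Tendsto (fun a ↦ (1 + exp (-2 * a)) * (π / 2)) atTop (𝓝 (π / 2)) := by
    simpa [Function.comp_def] using ((by fun_prop : Continuous fun ε : ℝ ↦ (1 + ε) * (π / 2)).tendsto 0).comp hε
  have hupp : Tendsto (fun a ↦ (1 + exp (-2 * a)) / √(1 - exp (-2 * a) ^ 2) * (π / 2)) atTop
      (𝓝 (π / 2)) := by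
    have hcont : ContinuousAt (fun ε : ℝ ↦ (1 + ε) / √(1 - ε ^ 2) * (π / 2)) 0 := by
      fun_prop (disch := simp)
    simpa [Function.comp_def] using hcont.tendsto.comp hε
  refine tendsto_of_tendsto_of_tendsto_of_le_of_le' hlow hupp ?_ ?_ <;>
    filter_upwards [eventually_gt_atTop 0] with a ha
  exacts [(H_cosh_bounds ha).1, (H_cosh_bounds ha).2]

/-- `H(d)` tends to `π/2` as `d → +∞`. -/
theorem H_tendsto_pi_div_two :
    Filter.Tendsto H Filter.atTop (nhds (Real.pi / 2)) := by
  refine (tendsto_H_cosh_atTop.comp tendsto_arcosh_atTop).congr' ?_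
  filter_upwards [eventually_ge_atTop 1] with d hd
  simp [cosh_arcosh hd]
end
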